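/- A discrete finitely generated group G admits a free action by homeomorphisms on a compact metric space X such that some point of X is strongly regularly recurrent with dense G-orbit (i.e., G admits a free strongly regularly recurrent action) if and only if G is residually finite. -/

import Mathlib

/-!
If `x` is strongly regularly recurrent, the return times of `x` to the balls of radius `1/(n+1)`
contain finite-index subgroups, and everything in all of them fixes `x`; freeness makes their
intersection trivial, and their partial intersections form the required chain.

Conversely, let `N n` be the normal core of `Γ n`. The group acts coordinatewise on the
compact space `∏ n, G ⧸ N n`, and we take the orbit closure of `x = (N n)ₙ` (a copy of the
profinite completion along the chain). Since the stabilizers of the coordinates of `x` decrease,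
in the orbit closure `y n = x n` forces `y k = x k` for `k ≤ n`, so the clopen sets
`{y | y n = x n}` form a neighbourhood basis of `x` with return times `N n`. By normality every
point of `G ⧸ N n` has stabilizer `N n`, so the action is free.
-/

open Pointwise MeasureTheory

/-- The set of return times of `x` to `A`: `T_A(x) = {g ∈ G : g • x ∈ A}`. -/
def ReturnTimes (G : Type*) {X : Type*} [SMul G X] (x : X) (A : Set X) : Set G :=
  {g : G | g • x ∈ A}

/-- A point `x` is regularly recurrent if every open neighborhood of `x` contains the
`Γ`-orbit of `x` for some finite-index subgroup `Γ` of `G`. -/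
def RegularlyRecurrent (G : Type*) {X : Type*} [Group G] [TopologicalSpace X] [MulAction G X]
    (x : X) : Prop :=
  ∀ V : Set X, IsOpen V → x ∈ V →
    ∃ Γ : Subgroup G, Γ.FiniteIndex ∧ (Γ : Set G) ⊆ ReturnTimes G x V

/-- A point `x` is strongly regularly recurrent if every open neighborhood `V` of `x`
contains a clopen neighborhood `W` of `x` whose return-time set `T_W(x)` is a
finite-index normal subgroup of `G`. -/
def StronglyRegularlyRecurrent (G : Type*) {X : Type*} [Group G] [TopologicalSpace X]
    [MulAction G X] (x : X) : Prop :=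
  ∀ V : Set X, IsOpen V → x ∈ V →
    ∃ W : Set X, IsClopen W ∧ x ∈ W ∧ W ⊆ V ∧
      ∃ Γ : Subgroup G, Γ.Normal ∧ Γ.FiniteIndex ∧ ReturnTimes G x W = (Γ : Set G)

open MulAction Set

theorem Subgroup.exists_antitone_finiteIndex_of_iInter_eq_one {G : Type*} [Group G]
    {Γ : ℕ → Subgroup G} (hfi : ∀ n, (Γ n).FiniteIndex) (hΓ : ⋂ n, (Γ n : Set G) = {1}) :
    ∃ Λ : ℕ → Subgroup G, (∀ n, Λ (n + 1) ≤ Λ n) ∧ (∀ n, (Λ n).FiniteIndex) ∧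
      ⋂ n, (Λ n : Set G) = {1} := by
  refine ⟨fun n => ⨅ k ∈ Finset.Iic n, Γ k, fun n => ?_,
    fun n => Subgroup.finiteIndex_iInf' Γ fun k _ => hfi k, ?_⟩
  · exact biInf_mono fun k hk => Finset.Iic_subset_Iic.2 n.le_succ hk
  · refine subset_antisymm (hΓ ▸ iInter_mono fun n => ?_) (by simp)
    exact SetLike.coe_subset_coe.2 (iInf₂_le n (Finset.mem_Iic.2 le_rfl))

theorem StronglyRegularlyRecurrent.regularlyRecurrent {G X : Type*} [Group G] [TopologicalSpace X]
    [MulAction G X] {x : X} (hx : StronglyRegularlyRecurrent G x) : RegularlyRecurrent G x := by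
  intro V hV hxV
  obtain ⟨W, -, -, hWV, Γ, -, hΓ, hW⟩ := hx V hV hxV
  exact ⟨Γ, hΓ, hW ▸ fun _ hg => hWV hg⟩

theorem RegularlyRecurrent.exists_finiteIndex_iInter_eq_one {G X : Type*} [Group G]
    [MetricSpace X] [MulAction G X] {x : X} (hx : RegularlyRecurrent G x)
    (hfree : ∀ g : G, g • x = x → g = 1) :
    ∃ Γ : ℕ → Subgroup G, (∀ n, (Γ n).FiniteIndex) ∧ ⋂ n, (Γ n : Set G) = {1} := by
  choose Γ hfi hΓ using fun n : ℕ =>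
    hx _ Metric.isOpen_ball (Metric.mem_ball_self (Nat.one_div_pos_of_nat (n := n)))
  refine ⟨Γ, hfi, subset_antisymm (fun g hg => hfree g ?_) ?_⟩
  · have hdist (n : ℕ) : dist (g • x) x < 1 / (n + 1) := hΓ n (mem_iInter.1 hg n)
    refine eq_of_forall_dist_le fun ε hε => ?_
    obtain ⟨n, hn⟩ := exists_nat_one_div_lt hε
    exact (hdist n).le.trans hn.le
  · simp

theorem MulAction.stabilizer_smul_eq_of_normal {G α : Type*} [Group G] [MulAction G α] {a : α}
    [(stabilizer G a).Normal] (g : G) : stabilizer G (g • a) = stabilizer G a := by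
  rw [stabilizer_smul_eq_stabilizer_map_conj]
  exact Subgroup.Normal.map_conj_eq _ g

instance DiscreteTopology.continuousConstSMul {M α : Type*} [TopologicalSpace α]
    [DiscreteTopology α] [SMul M α] : ContinuousConstSMul M α :=
  ⟨fun _ => continuous_of_discreteTopology⟩

section OrbitClosure

variable (G : Type*) {Y : Type*} [Group G] [TopologicalSpace Y] [MulAction G Y]
  [ContinuousConstSMul G Y]

def orbitClosure (x : Y) : SubMulAction G Y where
  carrier := closure (orbit G x)
  smul_mem' g _ hy := smul_closure_orbit_subset g x (smul_mem_smul_set hy)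

def orbitClosure.point (x : Y) : orbitClosure G x :=
  ⟨x, subset_closure (mem_orbit_self x)⟩

instance (x : Y) : ContinuousConstSMul G (orbitClosure G x) where
  continuous_const_smul g :=
    ((continuous_const_smul g).comp continuous_subtype_val).subtype_mk _

instance [CompactSpace Y] (x : Y) : CompactSpace (orbitClosure G x) :=
  isCompact_iff_compactSpace.1 isClosed_closure.isCompact

theorem orbitClosure.dense_range_smul_point (x : Y) :
    Dense (range fun g : G => g • orbitClosure.point G x) := by
  refine Topology.IsInducing.subtypeVal.dense_iff.2 fun y => ?_
  rw [← range_comp]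
  exact y.2

end OrbitClosure

section Cylinders

variable {G : Type*} {E : ℕ → Type*} [Group G] [∀ n, TopologicalSpace (E n)]
  [∀ n, DiscreteTopology (E n)] [∀ n, MulAction G (E n)] {x : ∀ n, E n}

theorem apply_mem_orbit_of_mem_closure_orbit {y : ∀ n, E n} (hy : y ∈ closure (orbit G x))
    (n : ℕ) : y n ∈ orbit G (x n) := by
  refine closure_minimal (t := (fun z => z n) ⁻¹' orbit G (x n)) ?_
    ((isClosed_discrete _).preimage (continuous_apply n)) hy
  rintro _ ⟨g, rfl⟩
  exact ⟨g, rfl⟩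

theorem mem_cylinder_of_mem_closure_orbit (hanti : Antitone fun n => stabilizer G (x n))
    {y : ∀ n, E n} (hy : y ∈ closure (orbit G x)) {n : ℕ} (hyn : y n = x n) :
    y ∈ PiNat.cylinder x n := by
  refine PiNat.mem_cylinder_iff.2 fun k hk => ?_
  have hclosed : IsClosed {z : ∀ n, E n | z n = x n → z k = x k} :=
    (isClosed_discrete {p : E n × E k | p.1 = x n → p.2 = x k}).preimage
      ((continuous_apply n).prodMk (continuous_apply k))
  refine closure_minimal ?_ hclosed hy hyn
  rintro _ ⟨g, rfl⟩ hg
  exact hanti hk.le hg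

theorem eq_one_of_smul_mem_closure_orbit (hnormal : ∀ n, (stabilizer G (x n)).Normal)
    (htriv : ⋂ n, (stabilizer G (x n) : Set G) = {1}) {y : ∀ n, E n}
    (hy : y ∈ closure (orbit G x)) {g : G} (hg : g • y = y) : g = 1 := by
  have hmem (n : ℕ) : g ∈ stabilizer G (x n) := by
    obtain ⟨h, hh⟩ := apply_mem_orbit_of_mem_closure_orbit hy n
    have : g ∈ stabilizer G (y n) := congrFun hg n
    rwa [← hh, stabilizer_smul_eq_of_normal] at this
  have : g ∈ ⋂ n, (stabilizer G (x n) : Set G) := mem_iInter.2 hmem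
  rwa [htriv] at this

theorem stronglyRegularlyRecurrent_orbitClosure_point
    (hanti : Antitone fun n => stabilizer G (x n)) (hnormal : ∀ n, (stabilizer G (x n)).Normal)
    (hfi : ∀ n, (stabilizer G (x n)).FiniteIndex) :
    StronglyRegularlyRecurrent G (orbitClosure.point G x) := by
  intro V hV hxV
  obtain ⟨U, hU, rfl⟩ := isOpen_induced_iff.1 hV
  obtain ⟨_, ⟨z, n, rfl⟩, hxz, hzU⟩ :=
    (PiNat.isTopologicalBasis_cylinders E).exists_subset_of_mem_open hxV hU
  rw [← PiNat.mem_cylinder_iff_eq.1 hxz] at hzU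
  refine ⟨{y | (y : ∀ n, E n) n = x n}, ?_, rfl,
    fun y hy => hzU (mem_cylinder_of_mem_closure_orbit hanti y.2 hy),
    stabilizer G (x n), hnormal n, hfi n, rfl⟩
  exact (isClopen_discrete {x n}).preimage ((continuous_apply n).comp continuous_subtype_val)

end Cylinders

-- `Fin k` rather than `G ⧸ N`, so that the space built from it lives in `Type`.
theorem Subgroup.exists_mulAction_fin_stabilizer_eq {G : Type*} [Group G] (N : Subgroup G)
    [N.FiniteIndex] : ∃ (k : ℕ) (_ : MulAction G (Fin k)) (a : Fin k), stabilizer G a = N := by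
  let e := Finite.equivFin (G ⧸ N)
  let act := e.symm.mulAction G
  refine ⟨_, act, e (1 : G), ?_⟩
  ext g
  simp only [mem_stabilizer_iff, Equiv.smul_def, Equiv.symm_symm, Equiv.symm_apply_apply,
    EmbeddingLike.apply_eq_iff_eq]
  rw [← mem_stabilizer_iff, stabilizer_quotient]

theorem exists_free_stronglyRegularlyRecurrent_of_antitone {G : Type*} [Group G]
    {Γ : ℕ → Subgroup G} (hanti : ∀ n, Γ (n + 1) ≤ Γ n) (hfi : ∀ n, (Γ n).FiniteIndex)
    (htriv : ⋂ n, (Γ n : Set G) = {1}) :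
    ∃ (X : Type) (_ : MetricSpace X) (_ : MulAction G X),
      CompactSpace X ∧
      (∀ g : G, Continuous fun x : X => g • x) ∧
      (∀ (g : G) (x : X), g • x = x → g = 1) ∧
      ∃ x : X, StronglyRegularlyRecurrent G x ∧ Dense (Set.range fun g : G => g • x) := by
  choose k act a ha using fun n => (Γ n).normalCore.exists_mulAction_fin_stabilizer_eq
  let _ : ∀ n, MulAction G (Fin (k n)) := act
  -- its topology is definitionally the product topology, which the lemmas above are about
  let _ : MetricSpace (∀ n, Fin (k n)) := PiNat.metricSpace
  have hnormal (n : ℕ) : (stabilizer G (a n)).Normal := ha n ▸ Subgroup.normalCore_normal _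
  have hanti' : Antitone fun n => stabilizer G (a n) := by
    refine antitone_nat_of_succ_le fun n => ?_
    simpa only [ha] using Subgroup.normalCore_mono (hanti n)
  have htriv' : ⋂ n, (stabilizer G (a n) : Set G) = {1} := by
    refine subset_antisymm (htriv ▸ iInter_mono fun n => ?_) (by simp)
    simpa only [ha] using SetLike.coe_subset_coe.2 (Γ n).normalCore_le
  refine ⟨orbitClosure G a, inferInstance, inferInstance, inferInstance, continuous_const_smul,
    fun g y => eq_one_of_smul_mem_closure_orbit hnormal htriv' y.2 ∘ congrArg Subtype.val,
    orbitClosure.point G a, ?_, orbitClosure.dense_range_smul_point G a⟩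
  exact stronglyRegularlyRecurrent_orbitClosure_point hanti' hnormal fun n => ha n ▸ inferInstance

theorem statement10_general {G : Type*} [Group G] :
    (∃ (X : Type) (_ : MetricSpace X) (_ : MulAction G X),
      CompactSpace X ∧
      (∀ g : G, Continuous fun x : X => g • x) ∧
      (∀ (g : G) (x : X), g • x = x → g = 1) ∧
      ∃ x : X, StronglyRegularlyRecurrent G x ∧ Dense (Set.range fun g : G => g • x))
    ↔ ∃ Γ : ℕ → Subgroup G,
        (∀ n, Γ (n + 1) ≤ Γ n) ∧ (∀ n, (Γ n).FiniteIndex) ∧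
        (⋂ n, ((Γ n : Subgroup G) : Set G)) = {1} := by
  constructor
  · rintro ⟨X, _, _, -, -, hfree, x, hx, -⟩
    obtain ⟨Γ, hfi, htriv⟩ :=
      hx.regularlyRecurrent.exists_finiteIndex_iInter_eq_one fun g => hfree g x
    exact Subgroup.exists_antitone_finiteIndex_of_iInter_eq_one hfi htriv
  · rintro ⟨Γ, hanti, hfi, htriv⟩
    exact exists_free_stronglyRegularlyRecurrent_of_antitone hanti hfi htriv

/-- a finitely generated discrete group `G` admits a free strongly
regularly recurrent action on a compact metric space iff `G` is residually finite. -/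
theorem statement10 {G : Type*} [Group G] [Group.FG G] :
    (∃ (X : Type) (_ : MetricSpace X) (_ : MulAction G X),
      CompactSpace X ∧
      (∀ g : G, Continuous fun x : X => g • x) ∧
      (∀ (g : G) (x : X), g • x = x → g = 1) ∧
      ∃ x : X, StronglyRegularlyRecurrent G x ∧ Dense (Set.range fun g : G => g • x))
    ↔ ∃ Γ : ℕ → Subgroup G,
        (∀ n, Γ (n + 1) ≤ Γ n) ∧ (∀ n, (Γ n).FiniteIndex) ∧
        (⋂ n, ((Γ n : Subgroup G) : Set G)) = {1} :=
  statement10_general
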